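/- Let P be a consistent extended logic program (an LPOD in which every rule head is a single literal, all of whose standard Gelfond–Lifschitz answer sets are consistent). Then the three-valued answer sets of P coincide with the standard answer sets of P: an interpretation M is a three-valued answer set of P if and only if M takes values only in {F,T} and the set {L : M(L)=T} is a standard answer set of P. -/

import Mathlib

/-! Four truth values F < F* < T* < T. -/
inductive V4 : Type
  | F | Fs | Ts | T
  deriving DecidableEq, Repr

instance : Fintype V4 where
  elems := {V4.F, V4.Fs, V4.Ts, V4.T}
  complete x := by cases x <;> simp

namespace V4

def toNat : V4 → ℕ
  | F => 0
  | Fs => 1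
  | Ts => 2
  | T => 3

theorem toNat_injective : Function.Injective toNat := by
  intro a b h
  cases a <;> cases b <;> simp_all [toNat]

instance : LinearOrder V4 := LinearOrder.lift' toNat toNat_injective

instance : BoundedOrder V4 where
  top := T
  le_top a := by cases a <;> decide
  bot := F
  bot_le a := by cases a <;> decide

/-- Negation-as-failure: `not φ` is `T` if `φ ≤ F*`, else `F`. -/
def notv (a : V4) : V4 := if a ≤ Fs then T else F

/-- Ordered disjunction on truth values: `u × v = v` if `u = F*`, else `u`. -/
def times (a b : V4) : V4 := if a = Fs then b else a

end V4

variable {α : Type}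

/-- A ground literal: an atom together with a polarity (`true` = the atom itself,
`false` = its strong negation). -/
structure Lit (α : Type) where
  atom : α
  positive : Bool
  deriving DecidableEq

/-- A (four-valued) interpretation assigns a truth value to every literal.
Three-valued interpretations are the `solid` ones (no `T*` value). -/
abbrev Interp (α : Type) := Lit α → V4

/-- `I` is solid (equivalently, three-valued) if it assigns `T*` to no literal. -/
def solid (I : Interp α) : Prop := ∀ l, I l ≠ V4.Ts

/-- `I` is consistent: no atom has both the atom and its strong negation `T`. -/
def consistentI (I : Interp α) : Prop :=
  ∀ a : α, ¬ (I ⟨a, true⟩ = V4.T ∧ I ⟨a, false⟩ = V4.T)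

/-- `I` takes values only in `{F, T}`. -/
def twoValued (I : Interp α) : Prop := ∀ l, I l = V4.F ∨ I l = V4.T

/-- Value of the conjunction of a list of literals. -/
def evalConj (I : Interp α) (L : List (Lit α)) : V4 := (L.map I).foldr min V4.T

/-- Value of the conjunction `not B1 ∧ ⋯ ∧ not Bk`. -/
def evalNegs (I : Interp α) (L : List (Lit α)) : V4 :=
  (L.map (fun b => V4.notv (I b))).foldr min V4.T

/-- Value of the disjunction of a list of literals. -/
def evalDisj (I : Interp α) (L : List (Lit α)) : V4 := (L.map I).foldr max V4.F

/-- Value of an ordered disjunction of the given (nonempty) list of values.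
(`F*` is a right identity for `×`, so the fold computes `v1 × ⋯ × vn`.) -/
def evalOD (vs : List V4) : V4 := vs.foldr V4.times V4.Fs

/-- Pointwise `≤` on interpretations. -/
def interpLE (I J : Interp α) : Prop := ∀ l, I l ≤ J l

/-- The four-valued relation `⪯`: `u ⪯ v` iff `u = v` or `u ≺ v`, where
`F ≺ F*`, `F ≺ T*`, `F ≺ T` and `T* ≺ T`.  On three-valued (solid)
interpretations it restricts to the ordering generated by `F ≺ F*`, `F ≺ T`. -/
def preceq (u v : V4) : Prop :=
  u = v ∨ (u = V4.F ∧ v ≠ V4.F) ∨ (u = V4.Ts ∧ v = V4.T)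

/-- Pointwise `⪯` on interpretations. -/
def interpPreceq (I J : Interp α) : Prop := ∀ l, preceq (I l) (J l)

/-- The set of literals that are `T` in `I`. -/
def collapse (I : Interp α) : Set (Lit α) := { l | I l = V4.T }

/-! ### LPOD rules -/

/-- An LPOD rule `C1 × ⋯ × Cn ← A1,…,Am, not B1,…,not Bk` with head
`c1 :: cs` (so the head is nonempty). -/
structure Rule (α : Type) where
  c1 : Lit α
  cs : List (Lit α)
  pos : List (Lit α)
  neg : List (Lit α)

def Rule.headList (R : Rule α) : List (Lit α) := R.c1 :: R.cs

def Rule.headVal (R : Rule α) (I : Interp α) : V4 := evalOD (R.headList.map I)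

def Rule.bodyVal (R : Rule α) (I : Interp α) : V4 :=
  min (evalConj I R.pos) (evalNegs I R.neg)

/-- `I` satisfies the rule `R` (the rule evaluates to `T`). -/
def ruleSat (I : Interp α) (R : Rule α) : Prop := R.bodyVal I ≤ R.headVal I

/-- `I` is a model of the LPOD `P`. -/
def isModel (I : Interp α) (P : Set (Rule α)) : Prop := ∀ R ∈ P, ruleSat I R

/-! ### The ×-reduct of an LPOD -/

/-- A reduct rule `C ← [F*,] A1,…,Am`; `fstar` records whether the constant `F*`
occurs in the body. -/
structure RedRule (α : Type) where
  head : Lit α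
  pos : List (Lit α)
  fstar : Bool

def RedRule.bodyVal (r : RedRule α) (I : Interp α) : V4 :=
  min (if r.fstar then V4.Fs else V4.T) (evalConj I r.pos)

def redSat (I : Interp α) (r : RedRule α) : Prop := r.bodyVal I ≤ I r.head

def redModel (I : Interp α) (Q : Set (RedRule α)) : Prop := ∀ r ∈ Q, redSat I r

/-- Reduct rules generated by a head `C1,…,Cn`: rules `Cj ← F*, body` for
`j < r` and `Cr ← body`, where `r` is the least index with
`I C1 = ⋯ = I C_{r-1} = F*` and (`r = n` or `I Cr ≠ F*`). -/
def xredHead (I : Interp α) (body : List (Lit α)) : List (Lit α) → List (RedRule α)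
  | [] => []
  | [c] => [⟨c, body, false⟩]
  | c :: c' :: rest =>
    if I c = V4.Fs then ⟨c, body, true⟩ :: xredHead I body (c' :: rest)
    else [⟨c, body, false⟩]

/-- The ×-reduct of a rule w.r.t. `I`. -/
def xredRule (I : Interp α) (R : Rule α) : List (RedRule α) :=
  if ∃ b ∈ R.neg, I b = V4.T then [] else xredHead I R.pos R.headList

/-- The ×-reduct of an LPOD w.r.t. `I`. -/
def xreduct (I : Interp α) (P : Set (Rule α)) : Set (RedRule α) :=
  { r | ∃ R ∈ P, r ∈ xredRule I R }

/-- `M` is a three-valued answer set of the LPOD `P`: a consistent three-valued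
interpretation that is the `≤`-least (three-valued) model of `P^M_×`. -/
def threeAnswerSet (P : Set (Rule α)) (M : Interp α) : Prop :=
  solid M ∧ consistentI M ∧ redModel M (xreduct M P) ∧
  ∀ N : Interp α, solid N → redModel N (xreduct M P) → interpLE M N

/-! ### Two-valued notions: Brewka answer sets and GL answer sets -/

/-- A set of literals is consistent if it contains no complementary pair. -/
def twoConsistent (N : Set (Lit α)) : Prop :=
  ∀ a : α, ¬ (Lit.mk a true ∈ N ∧ Lit.mk a false ∈ N)

/-- `N` is a (two-valued) Brewka-model of the LPOD `P`. -/
def brewkaModel (N : Set (Lit α)) (P : Set (Rule α)) : Prop :=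
  ∀ R ∈ P, (∀ a ∈ R.pos, a ∈ N) → (∀ b ∈ R.neg, b ∉ N) → ∃ c ∈ R.headList, c ∈ N

/-- A positive rule `C ← A1,…,Am`. -/
structure PosRule (α : Type) where
  head : Lit α
  pos : List (Lit α)

/-- `N` is a two-valued model of a positive program. -/
def posModel (N : Set (Lit α)) (Q : Set (PosRule α)) : Prop :=
  ∀ r ∈ Q, (∀ a ∈ r.pos, a ∈ N) → r.head ∈ N

/-- The Brewka ×-reduct of an LPOD w.r.t. a set of literals `N`:
`Ci ← A1,…,Am` whenever `Ci ∈ N` and `N ∩ {C1,…,C_{i-1},B1,…,Bk} = ∅`. -/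
def brewkaReduct (N : Set (Lit α)) (P : Set (Rule α)) : Set (PosRule α) :=
  { r | ∃ R ∈ P, ∃ l1 l2 : List (Lit α),
      R.headList = l1 ++ r.head :: l2 ∧ r.pos = R.pos ∧ r.head ∈ N ∧
      (∀ c ∈ l1, c ∉ N) ∧ (∀ b ∈ R.neg, b ∉ N) }

/-- `N` is a Brewka answer set of the LPOD `P`. -/
def brewkaAnswerSet (P : Set (Rule α)) (N : Set (Lit α)) : Prop :=
  twoConsistent N ∧ brewkaModel N P ∧ posModel N (brewkaReduct N P) ∧
  ∀ N', posModel N' (brewkaReduct N P) → N ⊆ N'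

/-- The Gelfond–Lifschitz reduct of an extended logic program (an LPOD all
of whose rule heads are single literals) w.r.t. a set of literals `N`. -/
def glReduct (P : Set (Rule α)) (N : Set (Lit α)) : Set (PosRule α) :=
  { r | ∃ R ∈ P, (∀ b ∈ R.neg, b ∉ N) ∧ r.head = R.c1 ∧ r.pos = R.pos }

/-- `N` is a standard answer set of the extended logic program `P`: a consistent
set of literals that is the least model of `P^N`. -/
def stdAnswerSet (P : Set (Rule α)) (N : Set (Lit α)) : Prop :=
  twoConsistent N ∧ posModel N (glReduct P N) ∧
  ∀ N', posModel N' (glReduct P N) → N ⊆ N'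

/-! ### DLPODs -/

/-- A DLPOD rule `𝒞1 × ⋯ × 𝒞n ← A1,…,Am, not B1,…,not Bk`, where each `𝒞i`
is a disjunction of literals; the head is `c1 :: cs` (nonempty). -/
structure DRule (α : Type) where
  c1 : List (Lit α)
  cs : List (List (Lit α))
  pos : List (Lit α)
  neg : List (Lit α)

def DRule.headList (R : DRule α) : List (List (Lit α)) := R.c1 :: R.cs

def DRule.headVal (R : DRule α) (I : Interp α) : V4 :=
  evalOD (R.headList.map (evalDisj I))

def DRule.bodyVal (R : DRule α) (I : Interp α) : V4 :=
  min (evalConj I R.pos) (evalNegs I R.neg)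

def dRuleSat (I : Interp α) (R : DRule α) : Prop := R.bodyVal I ≤ R.headVal I

def isDModel (I : Interp α) (P : Set (DRule α)) : Prop := ∀ R ∈ P, dRuleSat I R

/-- A disjunctive reduct rule `𝒞 ← [F*,] A1,…,Am`. -/
structure DRedRule (α : Type) where
  head : List (Lit α)
  pos : List (Lit α)
  fstar : Bool

def DRedRule.bodyVal (r : DRedRule α) (I : Interp α) : V4 :=
  min (if r.fstar then V4.Fs else V4.T) (evalConj I r.pos)

def dredSat (I : Interp α) (r : DRedRule α) : Prop := r.bodyVal I ≤ evalDisj I r.head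

def dredModel (I : Interp α) (Q : Set (DRedRule α)) : Prop := ∀ r ∈ Q, dredSat I r

def dxredHead (I : Interp α) (body : List (Lit α)) :
    List (List (Lit α)) → List (DRedRule α)
  | [] => []
  | [c] => [⟨c, body, false⟩]
  | c :: c' :: rest =>
    if evalDisj I c = V4.Fs then ⟨c, body, true⟩ :: dxredHead I body (c' :: rest)
    else [⟨c, body, false⟩]

/-- The ×-reduct of a DLPOD rule w.r.t. `I`. -/
def dxredRule (I : Interp α) (R : DRule α) : List (DRedRule α) :=
  if ∃ b ∈ R.neg, I b = V4.T then [] else dxredHead I R.pos R.headList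

/-- The ×-reduct of a DLPOD w.r.t. `I`. -/
def dxreduct (I : Interp α) (P : Set (DRule α)) : Set (DRedRule α) :=
  { r | ∃ R ∈ P, r ∈ dxredRule I R }

/-- `M` is an answer set of the DLPOD `P`: a consistent three-valued
interpretation that is a `≤`-minimal (three-valued) model of `P^M_×`. -/
def dAnswerSet (P : Set (DRule α)) (M : Interp α) : Prop :=
  solid M ∧ consistentI M ∧ dredModel M (dxreduct M P) ∧
  ∀ N : Interp α, solid N → dredModel N (dxreduct M P) → interpLE N M → N = M

/-- A positive disjunctive rule `C1 ∨ ⋯ ∨ Cq ← A1,…,Am`. -/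
structure DPosRule (α : Type) where
  head : List (Lit α)
  pos : List (Lit α)

/-- `N` is a two-valued model of a positive disjunctive program. -/
def dposModel (N : Set (Lit α)) (Q : Set (DPosRule α)) : Prop :=
  ∀ r ∈ Q, (∀ a ∈ r.pos, a ∈ N) → ∃ c ∈ r.head, c ∈ N

/-- The Gelfond–Lifschitz reduct of a disjunctive extended logic program (a
DLPOD all of whose rule heads are single disjunctions). -/
def glDReduct (P : Set (DRule α)) (N : Set (Lit α)) : Set (DPosRule α) :=
  { r | ∃ R ∈ P, (∀ b ∈ R.neg, b ∉ N) ∧ r.head = R.c1 ∧ r.pos = R.pos }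

/-- `N` is a standard disjunctive answer set: a consistent set of literals that
is a minimal two-valued model of `P^N`. -/
def stdDAnswerSet (P : Set (DRule α)) (N : Set (Lit α)) : Prop :=
  twoConsistent N ∧ dposModel N (glDReduct P N) ∧
  ∀ N', dposModel N' (glDReduct P N) → N' ⊆ N → N' = N

/-!
For an extended logic program the ×-reduct `P^M_×` has no `F*` in any body: it is
the Gelfond–Lifschitz reduct `P^{collapse M}`, read as a positive program over three truth
values. A two-valued interpretation satisfies a positive program exactly when its set of
true literals is closed under it, and the indicator of any closed set is a solid model.
Comparing the least solid model with these indicators forces it to be two-valued, after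
which it is the indicator of the least closed set, i.e. of the standard answer set.
-/

namespace V4

theorem eq_T_of_T_le {x : V4} (h : T ≤ x) : x = T := le_antisymm le_top h

theorem eq_F_of_le_F {x : V4} (h : x ≤ F) : x = F := le_antisymm h bot_le

end V4

theorem evalConj_le_of_mem {I : Interp α} {L : List (Lit α)} {a : Lit α} (h : a ∈ L) :
    evalConj I L ≤ I a := by
  induction L with
  | nil => cases h
  | cons b L ih =>
    rcases List.mem_cons.mp h with rfl | h
    · exact min_le_left _ _
    · exact (min_le_right _ _).trans (ih h)

theorem evalConj_eq_T_iff {I : Interp α} {L : List (Lit α)} :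
    evalConj I L = V4.T ↔ ∀ a ∈ L, I a = V4.T := by
  induction L with
  | nil => simp [evalConj]
  | cons b L ih =>
    change min (I b) (evalConj I L) = V4.T ↔ _
    rw [List.forall_mem_cons, ← ih]
    constructor
    · intro h
      exact ⟨V4.eq_T_of_T_le (h ▸ min_le_left _ _), V4.eq_T_of_T_le (h ▸ min_le_right _ _)⟩
    · rintro ⟨hb, hL⟩
      rw [hb, hL, min_self]

theorem twoValued.solid {I : Interp α} (hI : twoValued I) : solid I := by
  intro l
  rcases hI l with h | h <;> simp [h]

open Classical in
noncomputable def Interp.ofSet (S : Set (Lit α)) : Interp α :=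
  fun l => if l ∈ S then V4.T else V4.F

theorem twoValued_ofSet (S : Set (Lit α)) : twoValued (Interp.ofSet S) := by
  intro l
  by_cases h : l ∈ S <;> simp [Interp.ofSet, h]

theorem collapse_ofSet (S : Set (Lit α)) : collapse (Interp.ofSet S) = S := by
  ext l
  by_cases h : l ∈ S <;> simp [collapse, Interp.ofSet, h]

theorem interpLE_ofSet_iff {M : Interp α} {S : Set (Lit α)} :
    interpLE M (Interp.ofSet S) ↔ ∀ l ∉ S, M l = V4.F := by
  refine ⟨fun h l hl => V4.eq_F_of_le_F (by simpa [Interp.ofSet, hl] using h l), fun h l => ?_⟩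
  by_cases hl : l ∈ S
  · simp only [Interp.ofSet, if_pos hl]
    exact le_top
  · simp [Interp.ofSet, hl, h l hl]

theorem interpLE_iff_collapse_subset {M N : Interp α} (hM : twoValued M) :
    interpLE M N ↔ collapse M ⊆ collapse N := by
  refine ⟨fun h l hl => V4.eq_T_of_T_le (hl ▸ h l), fun h l => ?_⟩
  rcases hM l with hl | hl
  · exact hl ▸ bot_le
  · rw [hl, show N l = V4.T from h hl]

def PosRule.toRedRule (r : PosRule α) : RedRule α := ⟨r.head, r.pos, false⟩

theorem PosRule.redSat_toRedRule_iff {I : Interp α} {r : PosRule α} :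
    redSat I r.toRedRule ↔ evalConj I r.pos ≤ I r.head := by
  change min V4.T (evalConj I r.pos) ≤ I r.head ↔ _
  rw [min_eq_right (show evalConj I r.pos ≤ V4.T from le_top)]

theorem PosRule.head_eq_T_of_redSat {I : Interp α} {r : PosRule α}
    (hr : redSat I r.toRedRule) (hpos : ∀ a ∈ r.pos, I a = V4.T) : I r.head = V4.T := by
  rw [PosRule.redSat_toRedRule_iff, evalConj_eq_T_iff.mpr hpos] at hr
  exact V4.eq_T_of_T_le hr

theorem PosRule.redSat_toRedRule {I : Interp α} {r : PosRule α} (hI : twoValued I)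
    (hr : (∀ a ∈ r.pos, I a = V4.T) → I r.head = V4.T) : redSat I r.toRedRule := by
  rw [PosRule.redSat_toRedRule_iff]
  by_cases hpos : ∀ a ∈ r.pos, I a = V4.T
  · rw [hr hpos]
    exact le_top
  · push Not at hpos
    obtain ⟨a, ha, haT⟩ := hpos
    calc evalConj I r.pos ≤ I a := evalConj_le_of_mem ha
      _ = V4.F := (hI a).resolve_right haT
      _ ≤ I r.head := bot_le

theorem posModel_collapse_of_redModel {I : Interp α} {Q : Set (PosRule α)}
    (hI : redModel I (PosRule.toRedRule '' Q)) : posModel (collapse I) Q :=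
  fun r hr hpos => PosRule.head_eq_T_of_redSat (hI _ ⟨r, hr, rfl⟩) hpos

theorem redModel_image_toRedRule_iff {I : Interp α} {Q : Set (PosRule α)} (hI : twoValued I) :
    redModel I (PosRule.toRedRule '' Q) ↔ posModel (collapse I) Q := by
  refine ⟨posModel_collapse_of_redModel, ?_⟩
  rintro hQ _ ⟨r, hr, rfl⟩
  exact PosRule.redSat_toRedRule hI (hQ r hr)

theorem redModel_image_toRedRule_least_iff {M : Interp α} {Q : Set (PosRule α)} :
    (redModel M (PosRule.toRedRule '' Q) ∧
      ∀ N : Interp α, solid N → redModel N (PosRule.toRedRule '' Q) → interpLE M N) ↔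
    (twoValued M ∧ posModel (collapse M) Q ∧ ∀ N', posModel N' Q → collapse M ⊆ N') := by
  constructor
  · rintro ⟨hM, hleast⟩
    have hclosed := posModel_collapse_of_redModel hM
    have hbelow : ∀ S, posModel S Q → ∀ l ∉ S, M l = V4.F := fun S hS =>
      interpLE_ofSet_iff.mp <| hleast _ (twoValued_ofSet S).solid <|
        (redModel_image_toRedRule_iff (twoValued_ofSet S)).mpr (by rwa [collapse_ofSet])
    refine ⟨fun l => (em (M l = V4.T)).elim Or.inr (fun h => Or.inl (hbelow _ hclosed l h)),
      hclosed, fun N' hN' l hl => ?_⟩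
    by_contra hlN'
    exact absurd (hl.symm.trans (hbelow N' hN' l hlN')) (by decide)
  · rintro ⟨h2, hclosed, hleast⟩
    exact ⟨(redModel_image_toRedRule_iff h2).mpr hclosed, fun N _ hN =>
      (interpLE_iff_collapse_subset h2).mpr (hleast _ (posModel_collapse_of_redModel hN))⟩

theorem xredRule_of_cs_eq_nil (I : Interp α) {R : Rule α} (h : R.cs = []) :
    xredRule I R = if ∃ b ∈ R.neg, I b = V4.T then [] else [⟨R.c1, R.pos, false⟩] := by
  rw [xredRule, Rule.headList, h]
  rfl

theorem xreduct_eq_image_glReduct {P : Set (Rule α)} (hELP : ∀ R ∈ P, R.cs = [])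
    (M : Interp α) : xreduct M P = PosRule.toRedRule '' glReduct P (collapse M) := by
  ext r
  simp only [xreduct, glReduct, Set.mem_ofPred_eq, Set.mem_image]
  constructor
  · rintro ⟨R, hR, hr⟩
    rw [xredRule_of_cs_eq_nil M (hELP R hR)] at hr
    split_ifs at hr with hneg
    · simp at hr
    · push Not at hneg
      exact ⟨⟨R.c1, R.pos⟩, ⟨R, hR, hneg, rfl, rfl⟩, (List.mem_singleton.mp hr).symm⟩
  · rintro ⟨⟨c, pos⟩, ⟨R, hR, hneg, rfl, rfl⟩, rfl⟩
    refine ⟨R, hR, ?_⟩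
    rw [xredRule_of_cs_eq_nil M (hELP R hR), if_neg (by push Not; exact hneg)]
    exact List.mem_singleton_self _

theorem lpod_threeAnswerSet_iff_stdAnswerSet_general {α : Type} (P : Set (Rule α))
    (hELP : ∀ R ∈ P, R.cs = []) :
    ∀ M : Interp α,
      threeAnswerSet P M ↔ (twoValued M ∧ stdAnswerSet P (collapse M)) := by
  intro M
  rw [threeAnswerSet, stdAnswerSet, xreduct_eq_image_glReduct hELP,
    redModel_image_toRedRule_least_iff]
  constructor
  · rintro ⟨-, hcons, h2, hclosed, hleast⟩
    exact ⟨h2, hcons, hclosed, hleast⟩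
  · rintro ⟨h2, hcons, hclosed, hleast⟩
    exact ⟨h2.solid, hcons, h2, hclosed, hleast⟩

/-- For a consistent extended logic program `P` (every rule head
a single literal, every least-model-of-its-own-GL-reduct set of literals
consistent), the three-valued answer sets of `P` are exactly the two-valued
interpretations whose set of true literals is a standard answer set of `P`. -/
theorem lpod_threeAnswerSet_iff_stdAnswerSet {α : Type} (P : Set (Rule α))
    (hELP : ∀ R ∈ P, R.cs = [])
    (hCons : ∀ N : Set (Lit α),
      (posModel N (glReduct P N) ∧ ∀ N', posModel N' (glReduct P N) → N ⊆ N') →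
      twoConsistent N) :
    ∀ M : Interp α,
      threeAnswerSet P M ↔ (twoValued M ∧ stdAnswerSet P (collapse M)) :=
  lpod_threeAnswerSet_iff_stdAnswerSet_general P hELP
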